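/- arXiv:2403.05462 — 2 statements merged into one kernel-verified Lean document; each statement's English description precedes it below -/
import Mathlib

section
/- The function $\hat v_1(r,\theta) = c_1 r^{-1/2}\log r\,\sin(\theta/2) + c_2 r^{-1/2}\sin(5\theta/2)$ with $c_1 = -\frac{1}{64}\phi^{(iv)}(0)K^3$ and $c_2 = -\frac{1}{384}\phi^{(iv)}(0)K^3$ satisfies, for all $r>0$ and $\theta\in(-\pi,\pi)$, the equation $-\partial_r^2 \hat v_1 - \frac{1}{r}\partial_r \hat v_1 - \frac{1}{r^2}\partial_\theta^2 \hat v_1 = -\frac{1}{64}\phi^{(iv)}(0) K^3 r^{-5/2}(\sin(\theta/2) + \sin(5\theta/2))$, together with the Neumann conditions $\partial_\theta \hat v_1(r,\pm\pi) = 0$. -/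
open Real

/-- The corrector profile `v̂₁(r,θ) = c₁ r^{-1/2} log r sin(θ/2) + c₂ r^{-1/2} sin(5θ/2)`. -/
noncomputable def vhat1 (c1 c2 r θ : ℝ) : ℝ :=
  c1 * r ^ (-(1 : ℝ) / 2) * Real.log r * Real.sin (θ / 2)
    + c2 * r ^ (-(1 : ℝ) / 2) * Real.sin (5 * θ / 2)

/-!
Separate variables. For fixed `θ`, `v̂₁` is the radial profile `r ^ a * (A * log r + B)` with
`a = -1/2`, a family that `d/dr` maps into itself, so `∂²_r + r⁻¹ ∂_r` is computed once for the
whole family; for fixed `r`, `∂²_θ` multiplies the two angular modes by `-1/4` and `-25/4`.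
At `a = -1/2` the `log r` terms cancel and `-Δ v̂₁ = r^{-5/2} (c₁ sin(θ/2) + 6 c₂ sin(5θ/2))`.
The Neumann conditions hold because `cos(θ/2)` and `cos(5θ/2)` vanish at `θ = ±π`.
-/

open Filter Topology

theorem deriv_deriv_eq_of_eventually_hasDerivAt {𝕜 F : Type*} [NontriviallyNormedField 𝕜]
    [NormedAddCommGroup F] [NormedSpace 𝕜 F] {f f' : 𝕜 → F} {f'' : F} {x : 𝕜}
    (hf : ∀ᶠ y in 𝓝 x, HasDerivAt f (f' y) y) (hf' : HasDerivAt f' f'' x) :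
    deriv (deriv f) x = f'' := by
  have hderiv : deriv f =ᶠ[𝓝 x] f' := hf.mono fun _ hy => hy.deriv
  rw [hderiv.deriv_eq]
  exact hf'.deriv

noncomputable def rpowLog (a A B x : ℝ) : ℝ := x ^ a * (A * log x + B)

section rpowLog

variable {a A B x : ℝ}

theorem hasDerivAt_rpowLog (hx : 0 < x) :
    HasDerivAt (rpowLog a A B) (rpowLog (a - 1) (a * A) (a * B + A) x) x := by
  have h : HasDerivAt (rpowLog a A B) (a * x ^ (a - 1) * (A * log x + B) + x ^ a * (A * x⁻¹)) x :=
    (hasDerivAt_rpow_const (Or.inl hx.ne')).mul (((hasDerivAt_log hx.ne').const_mul A).add_const B)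
  refine h.congr_deriv ?_
  simp only [rpowLog]
  rw [rpow_sub_one hx.ne']
  field_simp
  ring

theorem deriv_deriv_rpowLog (hx : 0 < x) :
    deriv (deriv (rpowLog a A B)) x
      = rpowLog (a - 1 - 1) ((a - 1) * (a * A)) ((a - 1) * (a * B + A) + a * A) x :=
  deriv_deriv_eq_of_eventually_hasDerivAt
    (eventually_gt_nhds hx |>.mono fun _ hy => hasDerivAt_rpowLog hy) (hasDerivAt_rpowLog hx)

/-- The radial part `∂²_r + r⁻¹ ∂_r` of the polar Laplacian. -/
theorem deriv_deriv_rpowLog_add_deriv_div (hx : 0 < x) :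
    deriv (deriv (rpowLog a A B)) x + deriv (rpowLog a A B) x / x
      = rpowLog (a - 2) (a ^ 2 * A) (a ^ 2 * B + 2 * a * A) x := by
  rw [deriv_deriv_rpowLog hx, (hasDerivAt_rpowLog hx).deriv]
  simp only [rpowLog]
  rw [show a - 2 = a - 1 - 1 by ring, rpow_sub_one hx.ne', rpow_sub_one hx.ne']
  field_simp
  ring

theorem rpowLog_div_sq (hx : 0 < x) : rpowLog a A B x / x ^ 2 = rpowLog (a - 2) A B x := by
  simp only [rpowLog]
  rw [rpow_sub hx, rpow_two]
  ring

end rpowLog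

theorem vhat1_eq_rpowLog (c1 c2 r θ : ℝ) :
    vhat1 c1 c2 r θ = rpowLog (-(1 : ℝ) / 2) (c1 * sin (θ / 2)) (c2 * sin (5 * θ / 2)) r := by
  simp only [vhat1, rpowLog]
  ring

theorem vhat1_radial_slice (c1 c2 θ : ℝ) :
    (fun r => vhat1 c1 c2 r θ) = rpowLog (-(1 : ℝ) / 2) (c1 * sin (θ / 2)) (c2 * sin (5 * θ / 2)) :=
  funext fun r => vhat1_eq_rpowLog c1 c2 r θ

theorem hasDerivAt_vhat1_angle (c1 c2 r θ : ℝ) :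
    HasDerivAt (fun θ' => vhat1 c1 c2 r θ')
      (r ^ (-(1 : ℝ) / 2) * (c1 * log r * cos (θ / 2) / 2 + 5 * c2 * cos (5 * θ / 2) / 2)) θ := by
  have h : HasDerivAt (fun θ' => vhat1 c1 c2 r θ')
      (c1 * r ^ (-(1 : ℝ) / 2) * log r * (cos (θ / 2) * (1 / 2))
        + c2 * r ^ (-(1 : ℝ) / 2) * (cos (5 * θ / 2) * (5 * 1 / 2))) θ :=
    (((hasDerivAt_id θ).div_const 2).sin.const_mul _).add
      ((((hasDerivAt_id θ).const_mul 5).div_const 2).sin.const_mul _)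
  exact h.congr_deriv (by ring)

theorem deriv_deriv_vhat1_angle (c1 c2 r θ : ℝ) :
    deriv (deriv fun θ' => vhat1 c1 c2 r θ') θ = vhat1 (-c1 / 4) (-(25 * c2) / 4) r θ := by
  have h : HasDerivAt
      (fun θ => r ^ (-(1 : ℝ) / 2) * (c1 * log r * cos (θ / 2) / 2 + 5 * c2 * cos (5 * θ / 2) / 2))
      (r ^ (-(1 : ℝ) / 2) * (c1 * log r * (-sin (θ / 2) * (1 / 2)) / 2
        + 5 * c2 * (-sin (5 * θ / 2) * (5 * 1 / 2)) / 2)) θ :=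
    (((((hasDerivAt_id θ).div_const 2).cos.const_mul _).div_const 2).add
      (((((hasDerivAt_id θ).const_mul 5).div_const 2).cos.const_mul _).div_const 2)).const_mul _
  rw [deriv_deriv_eq_of_eventually_hasDerivAt
    (Eventually.of_forall fun θ => hasDerivAt_vhat1_angle c1 c2 r θ) h, vhat1]
  ring

theorem deriv_vhat1_angle_eq_zero {c1 c2 r θ : ℝ} (h1 : cos (θ / 2) = 0)
    (h5 : cos (5 * θ / 2) = 0) : deriv (fun θ' => vhat1 c1 c2 r θ') θ = 0 := by
  rw [(hasDerivAt_vhat1_angle c1 c2 r θ).deriv, h1, h5]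
  ring

theorem vhat1_solves_corrector_PDE_general (K φ4 : ℝ) (c1 c2 : ℝ)
    (hc1 : c1 = -(1 / 64) * φ4 * K ^ 3) (hc2 : c2 = -(1 / 384) * φ4 * K ^ 3) :
    (∀ r θ : ℝ, 0 < r → θ ∈ Set.Ioo (-π) π →
      -(deriv (deriv (fun r' => vhat1 c1 c2 r' θ)) r)
        - (1 / r) * deriv (fun r' => vhat1 c1 c2 r' θ) r
        - (1 / r ^ 2) * deriv (deriv (fun θ' => vhat1 c1 c2 r θ')) θ
      = -(1 / 64) * φ4 * K ^ 3 * r ^ (-(5 : ℝ) / 2)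
          * (Real.sin (θ / 2) + Real.sin (5 * θ / 2))) ∧
    (∀ r : ℝ, 0 < r →
      deriv (fun θ' => vhat1 c1 c2 r θ') π = 0 ∧
      deriv (fun θ' => vhat1 c1 c2 r θ') (-π) = 0) := by
  have cos_zero (k : ℤ) {t : ℝ} (ht : t = (2 * k + 1) * π / 2) : cos t = 0 :=
    cos_eq_zero_iff.2 ⟨k, ht⟩
  refine ⟨fun r θ hr _ => ?_, fun r _ => ⟨?_, ?_⟩⟩
  · have radial := deriv_deriv_rpowLog_add_deriv_div (a := -(1 : ℝ) / 2)
      (A := c1 * sin (θ / 2)) (B := c2 * sin (5 * θ / 2)) hr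
    have angular := rpowLog_div_sq (a := -(1 : ℝ) / 2)
      (A := -c1 / 4 * sin (θ / 2)) (B := -(25 * c2) / 4 * sin (5 * θ / 2)) hr
    rw [vhat1_radial_slice, deriv_deriv_vhat1_angle, vhat1_eq_rpowLog]
    rw [show -(1 : ℝ) / 2 - 2 = -5 / 2 by norm_num] at radial angular
    linear_combination (norm := skip) -radial - angular
    simp only [rpowLog, hc1, hc2]
    ring
  · exact deriv_vhat1_angle_eq_zero (cos_zero 0 (by push_cast; ring))
      (cos_zero 2 (by push_cast; ring))
  · exact deriv_vhat1_angle_eq_zero (cos_zero (-1) (by push_cast; ring))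
      (cos_zero (-3) (by push_cast; ring))

theorem vhat1_solves_corrector_PDE (K φ4 : ℝ) (hK : 0 ≤ K) (c1 c2 : ℝ)
    (hc1 : c1 = -(1 / 64) * φ4 * K ^ 3) (hc2 : c2 = -(1 / 384) * φ4 * K ^ 3) :
    (∀ r θ : ℝ, 0 < r → θ ∈ Set.Ioo (-π) π →
      -(deriv (deriv (fun r' => vhat1 c1 c2 r' θ)) r)
        - (1 / r) * deriv (fun r' => vhat1 c1 c2 r' θ) r
        - (1 / r ^ 2) * deriv (deriv (fun θ' => vhat1 c1 c2 r θ')) θ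
      = -(1 / 64) * φ4 * K ^ 3 * r ^ (-(5 : ℝ) / 2)
          * (Real.sin (θ / 2) + Real.sin (5 * θ / 2))) ∧
    (∀ r : ℝ, 0 < r →
      deriv (fun θ' => vhat1 c1 c2 r θ') π = 0 ∧
      deriv (fun θ' => vhat1 c1 c2 r θ') (-π) = 0) :=
  vhat1_solves_corrector_PDE_general K φ4 c1 c2 hc1 hc2
end

section
/- Let $u, v, \eta: \Lambda \to \mathbb{R}$ with $\eta$ finitely supported, where $\Lambda = \mathbb{Z}^2 - (1/2,1/2)$ and $D$ is the discrete gradient with stencils $\mathcal{R}(m)$ (bonds crossing the crack removed). Then $\sum_{m\in\Lambda} Du(m)\cdot D[v\eta](m) = \sum_{m\in\Lambda} D[u\eta](m)\cdot Dv(m) + \sum_{m\in\Lambda}\big( v(m)(D\eta(m)\cdot Du(m)) - u(m)(D\eta(m)\cdot Dv(m))\big)$. -/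
/-! The cracked square lattice `Λ = ℤ² - (1/2,1/2)` is indexed by `ℤ × ℤ`, with
lattice site `m` placed at `(m₁ - 1/2, m₂ - 1/2)`.  The crack is
`Γ₀ = {(x₁,0) : x₁ ≤ 0}`; a vertical bond crosses it iff it joins the rows
`m₂ = 0, 1` (i.e. `x₂ = ∓1/2`) with `m₁ ≤ 0` (i.e. `x₁ < 0`). -/

/-- The nearest-neighbour interaction stencil `ℛ = {±e₁, ±e₂}`. -/
def Rfull : Finset (ℤ × ℤ) :=
  {((1 : ℤ), (0 : ℤ)), (-1, 0), (0, 1), (0, -1)}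

/-- The bond from `m` in direction `ρ` crosses the crack `Γ₀`. -/
def crosses (m ρ : ℤ × ℤ) : Prop :=
  m.1 ≤ 0 ∧ ((m.2 = 1 ∧ ρ = (0, -1)) ∨ (m.2 = 0 ∧ ρ = (0, 1)))

instance (m ρ : ℤ × ℤ) : Decidable (crosses m ρ) := by
  unfold crosses; infer_instance

/-- The cracked discrete gradient: `(Du(m))_ρ = u(m+ρ) - u(m)` if the bond does not
cross the crack, and `0` otherwise. -/
def Dg (u : ℤ × ℤ → ℝ) (m ρ : ℤ × ℤ) : ℝ :=
  if crosses m ρ then 0 else u (m + ρ) - u m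

/-- The pointwise dot product `Du(m) · Dv(m) = ∑_{ρ∈ℛ} (Du(m))_ρ (Dv(m))_ρ`. -/
def Ddot (u v : ℤ × ℤ → ℝ) (m : ℤ × ℤ) : ℝ :=
  ∑ ρ ∈ Rfull, Dg u m ρ * Dg v m ρ

open Function

lemma Dg_mul (a η : ℤ × ℤ → ℝ) (m ρ : ℤ × ℤ) :
    Dg (fun n => a n * η n) m ρ = Dg a m ρ * η (m + ρ) + a m * Dg η m ρ := by
  unfold Dg
  split <;> ring

lemma Ddot_mul_right (u v η : ℤ × ℤ → ℝ) (m : ℤ × ℤ) :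
    Ddot u (fun n => v n * η n) m
      = Ddot (fun n => u n * η n) v m + (v m * Ddot η u m - u m * Ddot η v m) := by
  simp only [Ddot, Finset.mul_sum, ← Finset.sum_sub_distrib, ← Finset.sum_add_distrib, Dg_mul]
  refine Finset.sum_congr rfl fun ρ _ => ?_
  ring

lemma hasFiniteSupport_Dg {f : ℤ × ℤ → ℝ} (hf : f.HasFiniteSupport) (ρ : ℤ × ℤ) :
    HasFiniteSupport fun m => Dg f m ρ := by
  have hdiff : HasFiniteSupport fun m => f (m + ρ) - f m :=
    (hf.fun_comp_of_injective (add_left_injective ρ)).fun_sub hf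
  refine hdiff.subset fun m hm => ?_
  simp only [Dg, mem_support] at hm ⊢
  split_ifs at hm
  exacts [absurd rfl hm, hm]

lemma hasFiniteSupport_Ddot {f : ℤ × ℤ → ℝ} (hf : f.HasFiniteSupport) (w : ℤ × ℤ → ℝ) :
    (Ddot f w).HasFiniteSupport :=
  HasFiniteSupport.sum (fun ρ => (hasFiniteSupport_Dg hf ρ).mul_left _) Rfull

theorem pushing_cutoff (u v η : ℤ × ℤ → ℝ) (hη : (Function.support η).Finite) :
    ∑' m : ℤ × ℤ, Ddot u (fun n => v n * η n) m
      = ∑' m : ℤ × ℤ, Ddot (fun n => u n * η n) v m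
        + ∑' m : ℤ × ℤ, (v m * Ddot η u m - u m * Ddot η v m) := by
  have hη' : η.HasFiniteSupport := hη
  have hproduct : Summable (Ddot (fun n => u n * η n) v) :=
    summable_of_hasFiniteSupport (hasFiniteSupport_Ddot (hη'.fun_mul_right u) v)
  have hcommutator : Summable fun m => v m * Ddot η u m - u m * Ddot η v m := by
    have := hasFiniteSupport_Ddot hη' u
    have := hasFiniteSupport_Ddot hη' v
    exact summable_of_hasFiniteSupport (by fun_prop)
  rw [← hproduct.tsum_add hcommutator]
  exact tsum_congr (Ddot_mul_right u v η)
end
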